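/- (Perov inequality, general sublinear case.) Let 0 ≤ α < 1, c ≥ 0, and let u, a, b : [t₀, ∞) → ℝ be continuous nonnegative functions. If u(t) ≤ c + ∫_{t₀}^t (a(s)·u(s) + b(s)·u(s)^α) ds for all t ≥ t₀, then u(t) ≤ ( c^{1-α}·exp((1-α)∫_{t₀}^t a(s) ds) + (1-α)∫_{t₀}^t b(s)·exp((1-α)∫_s^t a(r) dr) ds )^{1/(1-α)}. -/

import Mathlib

/-!
With `β = 1 - α` and `v(t) = c + ∫_{t₀}^t (a u + b u^α)`, we have `u ≤ v` and hence the Bernoulli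
differential inequality `v' ≤ a v + b v^α`. Multiplying by `β v^{-α}` linearises it:
`(v^β)' ≤ β a v^β + β b`, so `v^β e^{-βA} - β ∫ b e^{-βA}` is antitone, where `A` is a primitive of
`a`; this is the claimed bound for `v`, hence for `u`. The division by `v^α` needs `v > 0`, so one
first replaces `c` by `c + ε` and lets `ε → 0`.
-/

open Set intervalIntegral MeasureTheory Real

section Primitive

variable {f : ℝ → ℝ} {a b : ℝ}

lemma continuousOn_primitive_Icc (hab : a ≤ b) (hf : ContinuousOn f (Icc a b)) :
    ContinuousOn (fun t => ∫ s in a..t, f s) (Icc a b) := by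
  have := continuousOn_primitive_interval (μ := volume)
    (by rw [uIcc_of_le hab]; exact hf.integrableOn_Icc)
  rwa [uIcc_of_le hab] at this

lemma hasDerivAt_primitive_of_mem_Ioo (hf : ContinuousOn f (Icc a b)) {x : ℝ}
    (hx : x ∈ Ioo a b) : HasDerivAt (fun t => ∫ s in a..t, f s) (f x) x :=
  integral_hasDerivAt_right
    ((hf.mono (Icc_subset_Icc_right hx.2.le)).intervalIntegrable_of_Icc hx.1.le)
    ((hf.mono Ioo_subset_Icc_self).stronglyMeasurableAtFilter isOpen_Ioo x hx)
    (hf.continuousAt (Icc_mem_nhds hx.1 hx.2))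

end Primitive

lemma mul_rpow_neg_le_of_le_add {α v w a b : ℝ} (hv : 0 < v) (hw : w ≤ a * v + b * v ^ α) :
    w * v ^ (-α) ≤ a * v ^ (1 - α) + b :=
  calc w * v ^ (-α) ≤ (a * v + b * v ^ α) * v ^ (-α) :=
        mul_le_mul_of_nonneg_right hw (rpow_nonneg hv.le _)
    _ = a * v ^ (1 - α) + b := by
        rw [add_mul, sub_eq_add_neg, rpow_add hv, rpow_one, mul_assoc, mul_assoc,
          ← rpow_add hv, add_neg_cancel, rpow_zero, mul_one]

lemma exp_integral_mul_integral_mul_exp_neg {a b : ℝ → ℝ} {β t₀ T : ℝ} (hT : t₀ ≤ T)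
    (ha : ContinuousOn a (Icc t₀ T)) :
    exp (β * ∫ s in t₀..T, a s) * ∫ s in t₀..T, b s * exp (-(β * ∫ r in t₀..s, a r))
      = ∫ s in t₀..T, b s * exp (β * ∫ r in s..T, a r) := by
  rw [← intervalIntegral.integral_const_mul]
  refine integral_congr fun s hs => ?_
  rw [uIcc_of_le hT] at hs
  rw [← integral_interval_sub_left (ha.intervalIntegrable_of_Icc hT)
    ((ha.mono (Icc_subset_Icc_right hs.2)).intervalIntegrable_of_Icc hs.1),
    mul_sub, sub_eq_add_neg, exp_add]
  ring

theorem bernoulli_comparison {α t₀ T : ℝ} {v v' a b : ℝ → ℝ} (hα : α ≤ 1) (hT : t₀ ≤ T)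
    (hv : ContinuousOn v (Icc t₀ T)) (hv_pos : ∀ t ∈ Ioo t₀ T, 0 < v t)
    (hv' : ∀ t ∈ Ioo t₀ T, HasDerivAt v (v' t) t)
    (hv'_le : ∀ t ∈ Ioo t₀ T, v' t ≤ a t * v t + b t * v t ^ α)
    (ha : ContinuousOn a (Icc t₀ T)) (hb : ContinuousOn b (Icc t₀ T)) :
    v T ^ (1 - α) ≤ v t₀ ^ (1 - α) * exp ((1 - α) * ∫ s in t₀..T, a s)
      + (1 - α) * ∫ s in t₀..T, b s * exp ((1 - α) * ∫ r in s..T, a r) := by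
  set β := 1 - α
  have hβ : 0 ≤ β := sub_nonneg.2 hα
  set A : ℝ → ℝ := fun t => ∫ s in t₀..t, a s
  set G : ℝ → ℝ := fun s => b s * exp (-(β * A s))
  set φ : ℝ → ℝ := fun t => v t ^ β * exp (-(β * A t)) - β * ∫ s in t₀..t, G s
  have hexp : ContinuousOn (fun t => exp (-(β * A t))) (Icc t₀ T) :=
    continuous_exp.comp_continuousOn
      (continuousOn_const.mul (continuousOn_primitive_Icc hT ha)).neg
  have hG : ContinuousOn G (Icc t₀ T) := hb.mul hexp
  have hφ_cont : ContinuousOn φ (Icc t₀ T) :=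
    ((hv.rpow_const fun _ _ => Or.inr hβ).mul hexp).sub
      (continuousOn_const.mul (continuousOn_primitive_Icc hT hG))
  have hφ_deriv : ∀ x ∈ Ioo t₀ T, HasDerivAt φ
      (β * exp (-(β * A x)) * (v' x * v x ^ (-α) - (a x * v x ^ β + b x))) x := by
    intro x hx
    have hvβ := (hv' x hx).rpow_const (p := β) (Or.inl (hv_pos x hx).ne')
    have hE := (((hasDerivAt_primitive_of_mem_Ioo ha hx).const_mul β).neg).exp
    refine ((hvβ.mul hE).sub ((hasDerivAt_primitive_of_mem_Ioo hG hx).const_mul β)).congr_deriv ?_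
    rw [show β - 1 = -α by ring]
    simp only [G, A, Pi.neg_apply]
    ring
  have hφ_anti : AntitoneOn φ (Icc t₀ T) := by
    refine antitoneOn_of_hasDerivWithinAt_nonpos (convex_Icc _ _) hφ_cont
      (fun x hx => (hφ_deriv x (by rwa [interior_Icc] at hx)).hasDerivWithinAt) fun x hx => ?_
    rw [interior_Icc] at hx
    exact mul_nonpos_of_nonneg_of_nonpos (by positivity)
      (sub_nonpos.2 (mul_rpow_neg_le_of_le_add (hv_pos x hx) (hv'_le x hx)))
  have hφT : φ T ≤ φ t₀ := hφ_anti ⟨le_rfl, hT⟩ ⟨hT, le_rfl⟩ hT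
  have hφ₀ : φ t₀ = v t₀ ^ β := by simp [φ, A]
  rw [← exp_integral_mul_integral_mul_exp_neg hT ha]
  calc v T ^ β = v T ^ β * exp (-(β * A T)) * exp (β * A T) := by
        rw [mul_assoc, ← exp_add, neg_add_cancel, exp_zero, mul_one]
    _ ≤ (v t₀ ^ β + β * ∫ s in t₀..T, G s) * exp (β * A T) := by
        gcongr
        linarith [hφT.trans_eq hφ₀]
    _ = _ := by ring

theorem perov_inequality_of_pos {α c t₀ T : ℝ} {u a b : ℝ → ℝ} (hα0 : 0 ≤ α) (hα1 : α < 1)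
    (hc : 0 < c) (hT : t₀ ≤ T) (hu : ContinuousOn u (Icc t₀ T))
    (ha : ContinuousOn a (Icc t₀ T)) (hb : ContinuousOn b (Icc t₀ T))
    (hu0 : ∀ t ∈ Icc t₀ T, 0 ≤ u t) (ha0 : ∀ t ∈ Icc t₀ T, 0 ≤ a t)
    (hb0 : ∀ t ∈ Icc t₀ T, 0 ≤ b t)
    (hineq : ∀ t ∈ Icc t₀ T, u t ≤ c + ∫ s in t₀..t, (a s * u s + b s * u s ^ α)) :
    u T ≤ (c ^ (1 - α) * exp ((1 - α) * ∫ s in t₀..T, a s)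
      + (1 - α) * ∫ s in t₀..T, b s * exp ((1 - α) * ∫ r in s..T, a r)) ^ (1 / (1 - α)) := by
  set F : ℝ → ℝ := fun s => a s * u s + b s * u s ^ α
  set v : ℝ → ℝ := fun t => c + ∫ s in t₀..t, F s
  have hF : ContinuousOn F (Icc t₀ T) :=
    (ha.mul hu).add (hb.mul (hu.rpow_const fun _ _ => Or.inr hα0))
  have hF0 : ∀ s ∈ Icc t₀ T, 0 ≤ F s := fun s hs =>
    add_nonneg (mul_nonneg (ha0 s hs) (hu0 s hs)) (mul_nonneg (hb0 s hs) (rpow_nonneg (hu0 s hs) α))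
  have hv_pos : ∀ t ∈ Icc t₀ T, 0 < v t := fun t ht =>
    add_pos_of_pos_of_nonneg hc <| integral_nonneg ht.1 fun s hs => hF0 s ⟨hs.1, hs.2.trans ht.2⟩
  have hF_le : ∀ t ∈ Icc t₀ T, F t ≤ a t * v t + b t * v t ^ α := fun t ht =>
    add_le_add (mul_le_mul_of_nonneg_left (hineq t ht) (ha0 t ht))
      (mul_le_mul_of_nonneg_left (rpow_le_rpow (hu0 t ht) (hineq t ht) hα0) (hb0 t ht))
  have hbound := bernoulli_comparison (v := v) hα1.le hT (continuousOn_const.add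
      (continuousOn_primitive_Icc hT hF)) (fun t ht => hv_pos t (Ioo_subset_Icc_self ht))
    (fun t ht => (hasDerivAt_primitive_of_mem_Ioo hF ht).const_add c)
    (fun t ht => hF_le t (Ioo_subset_Icc_self ht)) ha hb
  have hv₀ : v t₀ = c := by simp [v]
  have hvT := hv_pos T ⟨hT, le_rfl⟩
  rw [hv₀] at hbound
  calc u T ≤ v T := hineq T ⟨hT, le_rfl⟩
    _ = (v T ^ (1 - α)) ^ (1 / (1 - α)) := by
        rw [one_div, rpow_rpow_inv hvT.le (by linarith)]
    _ ≤ _ := rpow_le_rpow (rpow_nonneg hvT.le _) hbound (one_div_nonneg.2 (by linarith))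

theorem perov_inequality {t₀ : ℝ} {α c : ℝ} (hα0 : 0 ≤ α) (hα1 : α < 1) (hc : 0 ≤ c)
    (u a b : ℝ → ℝ)
    (hu_cont : ContinuousOn u (Set.Ici t₀))
    (ha_cont : ContinuousOn a (Set.Ici t₀))
    (hb_cont : ContinuousOn b (Set.Ici t₀))
    (hu_nonneg : ∀ t ∈ Set.Ici t₀, 0 ≤ u t)
    (ha_nonneg : ∀ t ∈ Set.Ici t₀, 0 ≤ a t)
    (hb_nonneg : ∀ t ∈ Set.Ici t₀, 0 ≤ b t)
    (hineq : ∀ t ∈ Set.Ici t₀,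
      u t ≤ c + ∫ s in t₀..t, (a s * u s + b s * u s ^ α)) :
    ∀ t ∈ Set.Ici t₀,
      u t ≤ (c ^ (1 - α) * Real.exp ((1 - α) * ∫ s in t₀..t, a s)
        + (1 - α) * ∫ s in t₀..t, b s * Real.exp ((1 - α) * ∫ r in s..t, a r))
          ^ (1 / (1 - α)) := by
  intro t ht
  set R : ℝ → ℝ := fun c' => (c' ^ (1 - α) * exp ((1 - α) * ∫ s in t₀..t, a s)
    + (1 - α) * ∫ s in t₀..t, b s * exp ((1 - α) * ∫ r in s..t, a r)) ^ (1 / (1 - α))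
  have hR : Continuous R :=
    (((continuous_rpow_const (by linarith)).mul continuous_const).add continuous_const).rpow_const
      fun _ => Or.inr (one_div_nonneg.2 (by linarith))
  have hR_gt : ∀ c' ∈ Ioi c, u t ≤ R c' := fun c' hc' =>
    perov_inequality_of_pos hα0 hα1 (hc.trans_lt hc') ht (hu_cont.mono Icc_subset_Ici_self)
      (ha_cont.mono Icc_subset_Ici_self) (hb_cont.mono Icc_subset_Ici_self)
      (fun s hs => hu_nonneg s hs.1) (fun s hs => ha_nonneg s hs.1) (fun s hs => hb_nonneg s hs.1)
      fun s hs => by linarith [hineq s hs.1, mem_Ioi.1 hc']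
  exact ge_of_tendsto (hR.continuousWithinAt (s := Ioi c)) (eventually_nhdsWithin_of_forall hR_gt)
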